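/- A finite extension M/K of a perfect field K, with Galois closure M̃ and groups Gal(M̃/K) and Gal(M̃/M), is obtained by nontrivial strong general magnification from some subextension L/K if and only if there is an isomorphism Gal(M̃/K) ≅ A × B for nontrivial groups A and B under which Gal(M̃/M) corresponds to A' × B' for some subgroup A' ⊆ A with [A:A'] > 1 and some subgroup B' ⊆ B with [B:B'] > 1. -/

import Mathlib

open IntermediateField Module

section Defs

variable (K Kbar : Type*) [Field K] [Field Kbar] [Algebra K Kbar]

/-- The Galois closure inside the ambient field `Kbar` of an intermediate field `L` of
`Kbar / K`: the compositum of all the `K`-conjugates of `L` in `Kbar`. -/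
noncomputable def galClosure (L : IntermediateField K Kbar) : IntermediateField K Kbar :=
  ⨆ f : ↥L →ₐ[K] Kbar, f.fieldRange

/-- The subgroup `H = Gal(L̃/L)` of `G = Gal(L̃/K)`. -/
noncomputable def fixSub (L : IntermediateField K Kbar) :
    Subgroup (↥(galClosure K Kbar L) ≃ₐ[K] ↥(galClosure K Kbar L)) :=
  (IntermediateField.comap (galClosure K Kbar L).val L).fixingSubgroup

/-- The cluster size `r_K(L) = [N_G(H) : H]`. -/
noncomputable def clusterSize (L : IntermediateField K Kbar) : ℕ :=
  (fixSub K Kbar L).relIndex (Subgroup.normalizer (fixSub K Kbar L : Set (↥(galClosure K Kbar L) ≃ₐ[K] ↥(galClosure K Kbar L))))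

/-- The number of clusters `s_K(L) = [G : N_G(H)]`. -/
noncomputable def numClusters (L : IntermediateField K Kbar) : ℕ :=
  (Subgroup.normalizer (fixSub K Kbar L : Set (↥(galClosure K Kbar L) ≃ₐ[K] ↥(galClosure K Kbar L)))).index

/-- The ascending index `t_K(L) = [G : H^G]`. -/
noncomputable def ascIndex (L : IntermediateField K Kbar) : ℕ :=
  (Subgroup.normalClosure (fixSub K Kbar L :
      Set (↥(galClosure K Kbar L) ≃ₐ[K] ↥(galClosure K Kbar L)))).index

/-- The quantity `u_K(L) = [H^G : H]`. -/
noncomputable def uIndex (L : IntermediateField K Kbar) : ℕ :=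
  (fixSub K Kbar L).relIndex (Subgroup.normalClosure (fixSub K Kbar L :
      Set (↥(galClosure K Kbar L) ≃ₐ[K] ↥(galClosure K Kbar L))))

/-- `M/K` is obtained by strong cluster magnification from `L/K` through `F/K`. -/
def IsSCMvia (M L F : IntermediateField K Kbar) : Prop :=
  L ≤ M ∧ 2 < Module.finrank K ↥L ∧ FiniteDimensional K ↥F ∧ IsGalois K ↥F ∧
    galClosure K Kbar L ⊓ F = ⊥ ∧ L ⊔ F = M

/-- `M/K` is primitive: it is not obtained by a nontrivial strong cluster magnification
from any subextension over `K`. -/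
def IsPrimitive (M : IntermediateField K Kbar) : Prop :=
  ¬ ∃ L F : IntermediateField K Kbar, IsSCMvia K Kbar M L F ∧ F ≠ ⊥

/-- `M/K` is obtained by strong general magnification from `L/K` through `J/K`. -/
def IsSGMvia (M L J : IntermediateField K Kbar) : Prop :=
  L ≤ M ∧ 1 < Module.finrank K ↥L ∧ FiniteDimensional K ↥J ∧
    galClosure K Kbar L ⊓ galClosure K Kbar J = ⊥ ∧ L ⊔ J = M

/-- `M/K` is general primitive: not obtained by a nontrivial strong general magnification
from any subextension over `K`. -/
def IsGeneralPrimitive (M : IntermediateField K Kbar) : Prop :=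
  ¬ ∃ L J : IntermediateField K Kbar, IsSGMvia K Kbar M L J ∧ J ≠ ⊥

/-- `F/E` is a Galois pair of intermediate fields: `E ≤ F` and `F/E` is Galois. -/
def IsGaloisPair (E F : IntermediateField K Kbar) : Prop :=
  ∃ h : E ≤ F, IsGalois ↥E ↥(IntermediateField.extendScalars h)

/-- One step of the unique descending chain: `N'` is an intermediate field of `N/K` such
that `N/N'` is Galois of maximal possible degree. -/
def DescStep (N N' : IntermediateField K Kbar) : Prop :=
  N' ≤ N ∧ IsGaloisPair K Kbar N' N ∧
    ∀ N'' : IntermediateField K Kbar, N'' ≤ N → IsGaloisPair K Kbar N'' N →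
      Module.finrank K ↥N' ≤ Module.finrank K ↥N''

/-- One step of the unique ascending chain for `L/K`: `F'` is an intermediate field of
`L/F` such that `F'/F` is Galois of maximal possible degree. -/
def AscStep (L F F' : IntermediateField K Kbar) : Prop :=
  F ≤ F' ∧ F' ≤ L ∧ IsGaloisPair K Kbar F F' ∧
    ∀ F'' : IntermediateField K Kbar, F ≤ F'' → F'' ≤ L → IsGaloisPair K Kbar F F'' →
      Module.finrank K ↥F'' ≤ Module.finrank K ↥F'

/-- `E` occurs in the unique descending chain of `L/K`. -/
def InDescChain (L E : IntermediateField K Kbar) : Prop :=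
  Relation.ReflTransGen (DescStep K Kbar) L E

/-- `E` occurs in the unique ascending chain of `L/K`. -/
def InAscChain (L E : IntermediateField K Kbar) : Prop :=
  Relation.ReflTransGen (AscStep K Kbar L) ⊥ E

end Defs

/-!
In the Galois extension `M̃/K`, a compositum `M = LJ` with `L̃ ∩ J̃ = K` has `L̃J̃ = M̃`, so
`A = Gal(M̃/J̃)` and `B = Gal(M̃/L̃)` are complementary normal subgroups and
`Gal(M̃/M) = H₁ ∩ H₂` with `B ≤ H₁ = Gal(M̃/L)` and `A ≤ H₂ = Gal(M̃/J)`. Conversely every such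
configuration of subgroups comes from fields `L = M̃^H₁ ⊆ M̃^B` and `J = M̃^H₂ ⊆ M̃^A`. On the group
side, Dedekind's modular law gives `H₁ = (H₁ ∩ A)B` and `H₂ = A(H₂ ∩ B)`, hence
`H₁ ∩ H₂ = (H₁ ∩ A)(H₂ ∩ B)`; and `H₁ ≠ G` exactly when `H₁ ∩ A ≠ A`.
-/

namespace Subgroup

variable {G : Type*} [Group G]

theorem sup_inf_assoc_of_le_of_normal {H K : Subgroup G} (N : Subgroup G) [N.Normal]
    (h : H ≤ K) : (H ⊔ N) ⊓ K = H ⊔ N ⊓ K := by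
  refine le_antisymm ?_ (sup_le (le_inf le_sup_left h) (inf_le_inf_right K le_sup_right))
  rintro _ ⟨hx, hxK⟩
  obtain ⟨a, ha, n, hn, rfl⟩ := (mul_normal H N).subst (motive := fun s => _ ∈ s) hx
  have hnK : n ∈ K := by simpa using K.mul_mem (K.inv_mem (h ha)) hxK
  exact mul_mem_sup ha ⟨hn, hnK⟩

theorem sup_inf_sup_eq_of_disjoint {A B A' B' : Subgroup G} [A.Normal] [B.Normal]
    (hAB : Disjoint A B) (hA' : A' ≤ A) (hB' : B' ≤ B) :
    (A' ⊔ B) ⊓ (A ⊔ B') = A' ⊔ B' := by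
  have hB : B ⊓ (A ⊔ B') = B' := by
    rw [inf_comm, sup_comm, sup_inf_assoc_of_le_of_normal A hB', hAB.eq_bot, sup_bot_eq]
  rw [sup_inf_assoc_of_le_of_normal B (hA'.trans le_sup_left), hB]

theorem inf_sup_eq_of_isCompl {A B H : Subgroup G} [A.Normal] (hAB : IsCompl A B)
    (hB : B ≤ H) : H ⊓ A ⊔ B = H := by
  rw [sup_comm, inf_comm, ← sup_inf_assoc_of_le_of_normal A hB, sup_comm, hAB.sup_eq_top,
    top_inf_eq]

theorem one_lt_relIndex_iff [Finite G] {H K : Subgroup G} : 1 < H.relIndex K ↔ ¬ K ≤ H := by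
  rw [← relIndex_eq_one, Nat.one_lt_iff_ne_zero_and_ne_one]
  exact and_iff_right index_ne_zero_of_finite

/-- `H` corresponds to `A' × B'` under `G ≅ A × B`, with `A' < A` and `B' < B`. -/
def IsSplitProduct (H : Subgroup G) : Prop :=
  ∃ A B : Subgroup G, A.Normal ∧ B.Normal ∧ IsCompl A B ∧ A ≠ ⊥ ∧ B ≠ ⊥ ∧
    ∃ A' B' : Subgroup G,
      A' ≤ A ∧ B' ≤ B ∧ 1 < A'.relIndex A ∧ 1 < B'.relIndex B ∧ A' ⊔ B' = H

theorem isSplitProduct_iff [Finite G] {H : Subgroup G} :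
    H.IsSplitProduct ↔ ∃ A B : Subgroup G, A.Normal ∧ B.Normal ∧ IsCompl A B ∧
      ∃ H₁ H₂ : Subgroup G, B ≤ H₁ ∧ A ≤ H₂ ∧ H₁ ≠ ⊤ ∧ H₂ ≠ ⊤ ∧ H₁ ⊓ H₂ = H := by
  constructor
  · rintro ⟨A, B, hA, hB, hAB, -, -, A', B', hA', hB', hAA', hBB', rfl⟩
    refine ⟨A, B, hA, hB, hAB, A' ⊔ B, A ⊔ B', le_sup_right, le_sup_left, ?_, ?_,
      sup_inf_sup_eq_of_disjoint hAB.disjoint hA' hB'⟩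
    · intro htop
      have := sup_inf_sup_eq_of_disjoint hAB.disjoint hA' (bot_le : ⊥ ≤ B)
      rw [htop, top_inf_eq, sup_bot_eq, sup_bot_eq] at this
      exact one_lt_relIndex_iff.1 hAA' this.le
    · intro htop
      have := sup_inf_sup_eq_of_disjoint hAB.disjoint (bot_le : ⊥ ≤ A) hB'
      rw [htop, inf_top_eq, bot_sup_eq, bot_sup_eq] at this
      exact one_lt_relIndex_iff.1 hBB' this.le
  · rintro ⟨A, B, hA, hB, hAB, H₁, H₂, hBH₁, hAH₂, hH₁, hH₂, rfl⟩
    have hAH₁ : ¬ A ≤ H₁ := fun h => hH₁ (top_le_iff.1 (hAB.sup_eq_top ▸ sup_le h hBH₁))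
    have hBH₂ : ¬ B ≤ H₂ := fun h => hH₂ (top_le_iff.1 (hAB.sup_eq_top ▸ sup_le hAH₂ h))
    refine ⟨A, B, hA, hB, hAB, ?_, ?_, H₁ ⊓ A, H₂ ⊓ B, inf_le_right, inf_le_right,
      one_lt_relIndex_iff.2 fun h => hAH₁ (h.trans inf_le_left),
      one_lt_relIndex_iff.2 fun h => hBH₂ (h.trans inf_le_left), ?_⟩
    · rintro rfl
      exact hAH₁ bot_le
    · rintro rfl
      exact hBH₂ bot_le
    rw [← sup_inf_sup_eq_of_disjoint hAB.disjoint inf_le_right inf_le_right,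
      inf_sup_eq_of_isCompl hAB hBH₁, sup_comm, inf_sup_eq_of_isCompl hAB.symm hAH₂]

end Subgroup

namespace IntermediateField

variable {K L : Type*} [Field K] [Field L] [Algebra K L]

theorem restrict_mono {E F F' : IntermediateField K L} {hF : F ≤ E} {hF' : F' ≤ E}
    (h : F ≤ F') : restrict hF ≤ restrict hF' := fun x hx =>
  (mem_restrict hF' x).2 (h ((mem_restrict hF x).1 hx))

theorem restrict_eq_bot_iff {E F : IntermediateField K L} (h : F ≤ E) :
    restrict h = ⊥ ↔ F = ⊥ := by
  rw [← lift_inj, lift_restrict, lift_bot]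

theorem comap_val_eq_restrict {E F : IntermediateField K L} (h : F ≤ E) :
    comap E.val F = restrict h := by
  ext x
  exact (mem_restrict h x).symm

theorem normalClosure_sup [Normal K L] (F F' : IntermediateField K L) :
    normalClosure K ↥(F ⊔ F') L = normalClosure K F L ⊔ normalClosure K F' L :=
  le_antisymm
    (normalClosure_le_iff_of_normal.2 (sup_le_sup (le_normalClosure F) (le_normalClosure F')))
    (sup_le (normalClosure_mono _ _ le_sup_left) (normalClosure_mono _ _ le_sup_right))

/-- Inside a Galois extension `E/K`, `L'` and `J'` play the roles of the Galois closures `L̃`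
and `J̃` in a strong general magnification `M = LJ`. -/
def IsSplitCompositum (M : IntermediateField K L) : Prop :=
  ∃ L' J' : IntermediateField K L, Normal K L' ∧ Normal K J' ∧ IsCompl L' J' ∧
    ∃ L₀ J₀ : IntermediateField K L, L₀ ≤ L' ∧ J₀ ≤ J' ∧ L₀ ≠ ⊥ ∧ J₀ ≠ ⊥ ∧ L₀ ⊔ J₀ = M

end IntermediateField

namespace IsGalois

variable {K E : Type*} [Field K] [Field E] [Algebra K E] [FiniteDimensional K E] [IsGalois K E]

theorem fixedField_eq_bot_iff {H : Subgroup Gal(E/K)} : fixedField H = ⊥ ↔ H = ⊤ := by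
  refine ⟨fun h => ?_, fun h => h ▸ fixedField_top⟩
  rw [← fixingSubgroup_fixedField H, h, fixingSubgroup_bot]

theorem fixingSubgroup_eq_top_iff {L : IntermediateField K E} :
    L.fixingSubgroup = ⊤ ↔ L = ⊥ := by
  refine ⟨fun h => ?_, fun h => h ▸ fixingSubgroup_bot⟩
  rw [← fixedField_fixingSubgroup L, h, fixedField_top]

theorem fixedField_inf (H H' : Subgroup Gal(E/K)) :
    fixedField (H ⊓ H') = fixedField H ⊔ fixedField H' :=
  intermediateFieldEquivSubgroup.symm.map_sup (OrderDual.toDual H) (OrderDual.toDual H')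

theorem isCompl_fixedField_iff {H H' : Subgroup Gal(E/K)} :
    IsCompl (fixedField H) (fixedField H') ↔ IsCompl H H' :=
  intermediateFieldEquivSubgroup.symm.isCompl_iff.symm.trans isCompl_toDual_iff

theorem isCompl_fixingSubgroup_iff {L J : IntermediateField K E} :
    IsCompl L.fixingSubgroup J.fixingSubgroup ↔ IsCompl L J := by
  rw [← isCompl_fixedField_iff, fixedField_fixingSubgroup, fixedField_fixingSubgroup]

theorem isSplitProduct_fixingSubgroup_iff {M : IntermediateField K E} :
    M.fixingSubgroup.IsSplitProduct ↔ M.IsSplitCompositum := by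
  rw [Subgroup.isSplitProduct_iff]
  constructor
  · rintro ⟨A, B, hA, hB, hAB, H₁, H₂, hBH₁, hAH₂, hH₁, hH₂, hM⟩
    refine ⟨fixedField B, fixedField A, inferInstance, inferInstance,
      isCompl_fixedField_iff.2 hAB.symm, fixedField H₁, fixedField H₂, fixedField_le hBH₁,
      fixedField_le hAH₂, mt fixedField_eq_bot_iff.1 hH₁, mt fixedField_eq_bot_iff.1 hH₂, ?_⟩
    rw [← fixedField_inf, hM, fixedField_fixingSubgroup]
  · rintro ⟨L', J', hL', hJ', hLJ', L, J, hL, hJ, hL0, hJ0, rfl⟩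
    have : IsGalois K L' := ⟨⟩
    have : IsGalois K J' := ⟨⟩
    exact ⟨J'.fixingSubgroup, L'.fixingSubgroup, inferInstance, inferInstance,
      isCompl_fixingSubgroup_iff.2 hLJ'.symm, L.fixingSubgroup, J.fixingSubgroup,
      fixingSubgroup_le hL, fixingSubgroup_le hJ, mt fixingSubgroup_eq_top_iff.1 hL0,
      mt fixingSubgroup_eq_top_iff.1 hJ0, fixingSubgroup_sup.symm⟩

end IsGalois

section GalClosure

variable {K Kbar : Type*} [Field K] [Field Kbar] [Algebra K Kbar]

instance normal_galClosure [Normal K Kbar] (L : IntermediateField K Kbar) :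
    Normal K (galClosure K Kbar L) :=
  normalClosure.normal K L Kbar

instance finiteDimensional_galClosure (L : IntermediateField K Kbar) [FiniteDimensional K L] :
    FiniteDimensional K (galClosure K Kbar L) :=
  normalClosure.is_finiteDimensional K L Kbar

theorem le_galClosure (L : IntermediateField K Kbar) : L ≤ galClosure K Kbar L :=
  le_normalClosure L

theorem galClosure_mono [Normal K Kbar] {L L' : IntermediateField K Kbar} (h : L ≤ L') :
    galClosure K Kbar L ≤ galClosure K Kbar L' :=
  normalClosure_mono L L' h

theorem galClosure_sup [Normal K Kbar] (L J : IntermediateField K Kbar) :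
    galClosure K Kbar (L ⊔ J) = galClosure K Kbar L ⊔ galClosure K Kbar J :=
  normalClosure_sup L J

theorem galClosure_lift_le [Normal K Kbar] {E : IntermediateField K Kbar}
    {F F' : IntermediateField K E} [Normal K F'] (h : F ≤ F') :
    galClosure K Kbar (lift F) ≤ lift F' :=
  have : Normal K (lift F') := .of_algEquiv (liftAlgEquiv F')
  normalClosure_le_iff_of_normal.2 (map_mono _ h)

theorem exists_isSGMvia_ne_bot_iff_isSplitCompositum [Normal K Kbar]
    (M : IntermediateField K Kbar) [FiniteDimensional K M] :
    (∃ L J : IntermediateField K Kbar, IsSGMvia K Kbar M L J ∧ J ≠ ⊥) ↔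
      (restrict (le_galClosure M)).IsSplitCompositum := by
  constructor
  · rintro ⟨L, J, ⟨-, hL1, -, hLJ, rfl⟩, hJ0⟩
    have hL : galClosure K Kbar L ≤ galClosure K Kbar (L ⊔ J) := galClosure_mono le_sup_left
    have hJ : galClosure K Kbar J ≤ galClosure K Kbar (L ⊔ J) := galClosure_mono le_sup_right
    refine ⟨restrict hL, restrict hJ, .of_algEquiv (restrictAlgEquiv hL),
      .of_algEquiv (restrictAlgEquiv hJ), ⟨?_, ?_⟩, restrict ((le_galClosure L).trans hL),
      restrict ((le_galClosure J).trans hJ), restrict_mono (le_galClosure L),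
      restrict_mono (le_galClosure J), ?_, (restrict_eq_bot_iff _).not.2 hJ0, ?_⟩
    · rw [disjoint_iff, ← lift_inj, lift_inf, lift_restrict, lift_restrict, hLJ, lift_bot]
    · rw [codisjoint_iff, ← lift_inj, lift_sup, lift_restrict, lift_restrict, lift_top,
        galClosure_sup]
    · rw [Ne, restrict_eq_bot_iff, ← IntermediateField.finrank_eq_one_iff]
      exact hL1.ne'
    · rw [← lift_inj, lift_sup, lift_restrict, lift_restrict, lift_restrict]
  · rintro ⟨L', J', hL', hJ', hLJ', L, J, hL, hJ, hL0, hJ0, hLJ⟩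
    have hM : lift L ⊔ lift J = M := by rw [← lift_sup, hLJ, lift_restrict]
    refine ⟨lift L, lift J, ⟨le_sup_left.trans hM.le, ?_, ?_, ?_, hM⟩, ?_⟩
    · rw [← (liftAlgEquiv L).toLinearEquiv.finrank_eq]
      refine lt_of_le_of_ne Module.finrank_pos (Ne.symm ?_)
      exact IntermediateField.finrank_eq_one_iff.not.2 hL0
    · exact (liftAlgEquiv J).toLinearEquiv.finiteDimensional
    · rw [eq_bot_iff, ← lift_bot, ← hLJ'.inf_eq_bot, lift_inf]
      exact inf_le_inf (galClosure_lift_le hL) (galClosure_lift_le hJ)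
    · rw [Ne, ← lift_bot, lift_inj]
      exact hJ0

end GalClosure

/-- A finite extension `M/K` of a perfect field `K` is obtained by a
nontrivial strong general magnification from some subextension `L/K` if and only if
`Gal(M̃/K)` decomposes as a direct product of two nontrivial (normal) factors `A × B` under
which `Gal(M̃/M)` corresponds to `A' × B'` for subgroups `A' ⊆ A`, `B' ⊆ B` with
`[A:A'] > 1` and `[B:B'] > 1`. -/
theorem strong_general_magnification_criterion
    (K Kbar : Type*) [Field K] [PerfectField K] [Field Kbar] [Algebra K Kbar]
    [IsAlgClosure K Kbar]
    (M : IntermediateField K Kbar) [FiniteDimensional K ↥M] :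
    (∃ L J : IntermediateField K Kbar, IsSGMvia K Kbar M L J ∧ J ≠ ⊥) ↔
    (∃ A B : Subgroup (↥(galClosure K Kbar M) ≃ₐ[K] ↥(galClosure K Kbar M)),
      A.Normal ∧ B.Normal ∧ IsCompl A B ∧ A ≠ ⊥ ∧ B ≠ ⊥ ∧
      ∃ A' B' : Subgroup (↥(galClosure K Kbar M) ≃ₐ[K] ↥(galClosure K Kbar M)),
        A' ≤ A ∧ B' ≤ B ∧ 1 < A'.relIndex A ∧ 1 < B'.relIndex B ∧
        A' ⊔ B' = fixSub K Kbar M) := by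
  have := IsAlgClosure.normal K Kbar
  have : IsGalois K (galClosure K Kbar M) := ⟨⟩
  rw [exists_isSGMvia_ne_bot_iff_isSplitCompositum, ← IsGalois.isSplitProduct_fixingSubgroup_iff,
    ← comap_val_eq_restrict]
  rfl
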